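/- Let {x_k}, {z_k} be sequences in ℝⁿ generated by the unconstrained accelerated mirror descent rule: z_{k+1} = z_k − ((k+1)σs/2)∇f(x_k) and ∇φ*(z_{k+1}) = (1/2)[(k+3)x_{k+1} − (k+1)x_k + (k+1)s∇f(x_k)]. If 0 < s ≤ 1/L, then for every k ≥ 0, f(x_k) − f(x*) ≤ (2σs[f(x₀) − f(x*)] + 4 D_{φ*}(z₁, z*)) / ((k+1)(k+2)σs). -/

import Mathlib

/-!
The energy `E_k = (k+1)(k+2)σs/4 · (f(x_k) - f(x⋆)) + D_{φ*}(z_{k+1}, z⋆)` is nonincreasing along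
the iteration. Its decrease combines co-coercivity of `∇f` (convexity plus `L`-Lipschitz gradient,
with `s ≤ 1/L`), the three-point identity for Bregman divergences, and the bound
`0 ≤ D_{φ*}(w, z) ≤ ‖w - z‖² / (2σ)`, which holds because `∇φ*(z)` minimises the `σ`-strongly convex
function `φ - ⟪z, ·⟫`. Dropping the nonnegative Bregman term from `E_k ≤ E_0` gives the rate.
-/

open Set Filter Topology
open scoped RealInnerProductSpace

/-- The Fenchel conjugate of a function on Euclidean space. -/
noncomputable def fenchelConj {n : ℕ} (φ : EuclideanSpace ℝ (Fin n) → ℝ)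
    (z : EuclideanSpace ℝ (Fin n)) : ℝ :=
  ⨆ x : EuclideanSpace ℝ (Fin n), (⟪z, x⟫ - φ x)

lemma le_add_deriv_add_of_deriv_sub_le {ℓ ℓ' : ℝ → ℝ} {K : ℝ}
    (hℓ : ∀ t, HasDerivAt ℓ (ℓ' t) t) (hK : ∀ t ∈ Ioo (0 : ℝ) 1, ℓ' t - ℓ' 0 ≤ K * t) :
    ℓ 1 ≤ ℓ 0 + ℓ' 0 + K / 2 := by
  let F : ℝ → ℝ := fun t ↦ ℓ 0 + t * ℓ' 0 + K / 2 * t ^ 2 - ℓ t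
  have hF : ∀ t, HasDerivAt F (ℓ' 0 + K * t - ℓ' t) t := fun t ↦ by
    refine ((((hasDerivAt_id t).mul_const (ℓ' 0)).const_add (ℓ 0)).add
      ((hasDerivAt_pow 2 t).const_mul (K / 2))).sub (hℓ t) |>.congr_deriv ?_
    simp only [one_mul, Nat.cast_ofNat, Nat.add_one_sub_one, pow_one, sub_left_inj, add_right_inj]
    ring
  have hmono : MonotoneOn F (Icc 0 1) := by
    refine monotoneOn_of_deriv_nonneg (convex_Icc 0 1)
      (fun t _ ↦ (hF t).continuousAt.continuousWithinAt)
      (fun t _ ↦ (hF t).differentiableAt.differentiableWithinAt) fun t ht ↦ ?_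
    rw [interior_Icc] at ht
    rw [(hF t).deriv]
    linarith [hK t ht]
  have := hmono (left_mem_Icc.2 zero_le_one) (right_mem_Icc.2 zero_le_one) zero_le_one
  simp only [F] at this
  linarith

section Smooth

variable {E : Type*} [NormedAddCommGroup E] [InnerProductSpace ℝ E] [CompleteSpace E]
  {f : E → ℝ} {f' : E → E} {L s : ℝ}

open AffineMap

lemma HasGradientAt.hasDerivAt_comp_lineMap {g x y : E} {t : ℝ}
    (hf : HasGradientAt f g (lineMap x y t)) :
    HasDerivAt (fun t ↦ f (lineMap x y t)) ⟪g, y - x⟫ t := by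
  simpa [Function.comp_def] using hf.hasFDerivAt.comp_hasDerivAt t hasDerivAt_lineMap

lemma ConvexOn.add_inner_le {g x : E} (hf : ConvexOn ℝ univ f) (hg : HasGradientAt f g x)
    (y : E) : f x + ⟪g, y - x⟫ ≤ f y := by
  have h := (hf.comp_affineMap (lineMap x y)).le_slope_of_hasDerivAt (mem_univ 0) (mem_univ 1)
    zero_lt_one (HasGradientAt.hasDerivAt_comp_lineMap (t := 0) (by simpa using hg))
  simp only [slope_def_field, Function.comp_apply, lineMap_apply_one, lineMap_apply_zero, sub_zero,
    div_one] at h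
  linarith

lemma le_add_inner_add_sq_of_lipschitz_gradient (hfd : ∀ x, HasGradientAt f (f' x) x)
    (hfL : ∀ x y, ‖f' x - f' y‖ ≤ L * ‖x - y‖) (x y : E) :
    f y ≤ f x + ⟪f' x, y - x⟫ + L / 2 * ‖y - x‖ ^ 2 := by
  have h := le_add_deriv_add_of_deriv_sub_le (ℓ := fun t ↦ f (lineMap x y t))
    (K := L * ‖y - x‖ ^ 2) (fun t ↦ (hfd _).hasDerivAt_comp_lineMap) fun t ht ↦ ?_
  · simp only [lineMap_apply_zero, lineMap_apply_one] at h
    linarith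
  calc ⟪f' (lineMap x y t), y - x⟫ - ⟪f' (lineMap x y (0 : ℝ)), y - x⟫
      = ⟪f' (lineMap x y t) - f' x, y - x⟫ := by simp [inner_sub_left]
    _ ≤ ‖f' (lineMap x y t) - f' x‖ * ‖y - x‖ := real_inner_le_norm _ _
    _ ≤ L * (t * ‖y - x‖) * ‖y - x‖ := by
        gcongr
        simpa [← dist_eq_norm, dist_lineMap_left, abs_of_pos ht.1, dist_comm x y] using
          hfL (lineMap x y t) x
    _ = L * ‖y - x‖ ^ 2 * t := by ring

/-- Co-coercivity of the gradient of a convex `L`-smooth function. -/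
lemma add_inner_add_sq_gradient_le (hf : ConvexOn ℝ univ f) (hfd : ∀ x, HasGradientAt f (f' x) x)
    (hfL : ∀ x y, ‖f' x - f' y‖ ≤ L * ‖x - y‖) (hs : 0 ≤ s) (hsL : s * L ≤ 1) (x y : E) :
    f x + ⟪f' x, y - x⟫ + s / 2 * ‖f' y - f' x‖ ^ 2 ≤ f y := by
  set g := f' y - f' x
  set v := y - s • g
  have hconv := hf.add_inner_le (hfd x) v
  have hdesc := le_add_inner_add_sq_of_lipschitz_gradient hfd hfL y v
  have hvx : v - x = (y - x) - s • g := by simp only [v]; abel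
  have hvy : v - y = -(s • g) := by simp only [v]; abel
  rw [hvx, inner_sub_right, real_inner_smul_right] at hconv
  rw [hvy, inner_neg_right, real_inner_smul_right, norm_neg, norm_smul, Real.norm_of_nonneg hs]
    at hdesc
  have hgg : ⟪f' y, g⟫ - ⟪f' x, g⟫ = ‖g‖ ^ 2 := by
    rw [← inner_sub_left, real_inner_self_eq_norm_sq]
  have hLs : L * s ^ 2 * ‖g‖ ^ 2 ≤ s * ‖g‖ ^ 2 := by
    have := mul_le_mul_of_nonneg_left hsL (mul_nonneg hs (sq_nonneg ‖g‖)); nlinarith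
  nlinarith

lemma HasGradientAt.eq_zero_of_forall_le {g x : E} (hg : HasGradientAt f g x)
    (hx : ∀ y, f x ≤ f y) : g = 0 := by
  simpa using (IsLocalMin.hasFDerivAt_eq_zero (Eventually.of_forall hx) hg.hasFDerivAt)

lemma hasGradientAt_of_abs_sub_le {F : E → ℝ} {p x : E} (C : ℝ)
    (h : ∀ w, |F w - F x - ⟪p, w - x⟫| ≤ C * ‖w - x‖ ^ 2) : HasGradientAt F p x := by
  rw [hasGradientAt_iff_isLittleO]
  refine Asymptotics.IsBigO.trans_isLittleO ?_ (Asymptotics.isLittleO_pow_sub_sub x one_lt_two)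
  exact Asymptotics.IsBigO.of_bound C (Eventually.of_forall fun w ↦ by simpa using h w)

end Smooth

section StrongConvex

variable {E : Type*} [NormedAddCommGroup E] {g : E → ℝ} {m : ℝ}

lemma StrongConvexOn.mul_norm_add_le [NormedSpace ℝ E] (hg : StrongConvexOn univ m g) {y : E}
    (hy : 1 ≤ ‖y‖) :
    ‖y‖ * g (‖y‖⁻¹ • y) + m / 2 * ‖y‖ * (‖y‖ - 1) ≤ g y + (‖y‖ - 1) * g 0 := by
  have hy0 : 0 < ‖y‖ := by linarith
  have h := hg.2 (mem_univ y) (mem_univ 0) (inv_nonneg.2 hy0.le)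
    (sub_nonneg.2 (inv_le_one_of_one_le₀ hy)) (add_sub_cancel _ _)
  simp only [smul_zero, add_zero, sub_zero, smul_eq_mul] at h
  have h' := mul_le_mul_of_nonneg_left h hy0.le
  have e : ‖y‖ * (‖y‖⁻¹ * g y + (1 - ‖y‖⁻¹) * g 0 - ‖y‖⁻¹ * (1 - ‖y‖⁻¹) * (m / 2 * ‖y‖ ^ 2))
      = g y + (‖y‖ - 1) * g 0 - m / 2 * ‖y‖ * (‖y‖ - 1) := by
    field_simp
  linarith

lemma StrongConvexOn.exists_forall_le [NormedSpace ℝ E] [FiniteDimensional ℝ E] (hm : 0 < m)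
    (hg : StrongConvexOn univ m g) : ∃ p, ∀ y, g p ≤ g y := by
  have hcont : Continuous g := continuousOn_univ.1 <|
    (hg.convexOn fun r ↦ by positivity).continuousOn isOpen_univ
  obtain ⟨w, -, hw⟩ := (isCompact_closedBall (0 : E) 1).exists_isMinOn ⟨0, by simp⟩
    hcont.continuousOn
  refine hcont.exists_forall_le' 0 ?_
  filter_upwards [tendsto_norm_cocompact_atTop.eventually
    (eventually_ge_atTop (max 1 (2 / m * (g 0 - g w) + 1)))] with y hy
  have hy1 : 1 ≤ ‖y‖ := le_of_max_le_left hy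
  have hyR : 2 / m * (g 0 - g w) + 1 ≤ ‖y‖ := le_of_max_le_right hy
  have hunit : g w ≤ g (‖y‖⁻¹ • y) := hw <| by
    simp [norm_smul, inv_mul_cancel₀ (by linarith : ‖y‖ ≠ 0)]
  have hR : g 0 - g w ≤ m / 2 * (‖y‖ - 1) := by
    have : 2 / m * (g 0 - g w) ≤ ‖y‖ - 1 := by linarith
    rw [div_mul_eq_mul_div, div_le_iff₀ hm] at this
    linarith
  nlinarith [hg.mul_norm_add_le hy1, mul_le_mul_of_nonneg_left hunit (by linarith : 0 ≤ ‖y‖),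
    mul_le_mul_of_nonneg_left hR (by linarith : 0 ≤ ‖y‖)]

lemma StrongConvexOn.add_sq_le_of_forall_le [NormedSpace ℝ E] (hg : StrongConvexOn univ m g)
    {p : E} (hp : ∀ y, g p ≤ g y) (y : E) : g p + m / 2 * ‖y - p‖ ^ 2 ≤ g y := by
  have key : ∀ t ∈ Ioo (0 : ℝ) 1, (1 - t) * (m / 2 * ‖y - p‖ ^ 2) ≤ g y - g p := by
    intro t ⟨ht0, ht1⟩
    have h := hg.2 (mem_univ y) (mem_univ p) ht0.le (by linarith) (add_sub_cancel t 1)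
    have hmin := hp (t • y + (1 - t) • p)
    simp only [smul_eq_mul] at h
    have : t * ((1 - t) * (m / 2 * ‖y - p‖ ^ 2)) ≤ t * (g y - g p) := by nlinarith
    exact le_of_mul_le_mul_left this ht0
  have hlim : Tendsto (fun t : ℝ ↦ (1 - t) * (m / 2 * ‖y - p‖ ^ 2)) (𝓝[>] 0)
      (𝓝 (m / 2 * ‖y - p‖ ^ 2)) := by
    refine tendsto_nhdsWithin_of_tendsto_nhds ?_
    exact ((continuous_const.sub continuous_id).mul continuous_const).tendsto' _ _ (by simp)
  have := le_of_tendsto hlim <| by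
    filter_upwards [Ioo_mem_nhdsGT zero_lt_one] with t ht using key t ht
  linarith

lemma StrongConvexOn.sub_inner [InnerProductSpace ℝ E] {s : Set E} (hg : StrongConvexOn s m g)
    (z : E) : StrongConvexOn s m fun y ↦ g y - ⟪z, y⟫ := by
  refine ⟨hg.1, fun a ha b hb t u ht hu htu ↦ ?_⟩
  have := hg.2 ha hb ht hu htu
  simp only [smul_eq_mul, inner_add_right, real_inner_smul_right] at this ⊢
  linarith

end StrongConvex

section Bregman

variable {E : Type*} [NormedAddCommGroup E] [InnerProductSpace ℝ E]

/-- The Bregman divergence `D_ψ(y, x)` of `ψ`, whose gradient map is `ψ'`. -/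
def bregmanDiv (ψ : E → ℝ) (ψ' : E → E) (y x : E) : ℝ :=
  ψ y - ψ x - ⟪ψ' x, y - x⟫

lemma bregmanDiv_sub_bregmanDiv (ψ : E → ℝ) (ψ' : E → E) (w z c : E) :
    bregmanDiv ψ ψ' w c - bregmanDiv ψ ψ' z c = bregmanDiv ψ ψ' w z + ⟪ψ' z - ψ' c, w - z⟫ := by
  simp only [bregmanDiv, inner_sub_left, inner_sub_right]
  ring

end Bregman

section FenchelConj

variable {n : ℕ} {φ : EuclideanSpace ℝ (Fin n) → ℝ} {σ : ℝ} {p q x z : EuclideanSpace ℝ (Fin n)}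

lemma fenchelConj_eq_of_forall_le (hp : ∀ y, φ p - ⟪z, p⟫ ≤ φ y - ⟪z, y⟫) :
    fenchelConj φ z = ⟪z, p⟫ - φ p := by
  have hle : ∀ y, ⟪z, y⟫ - φ y ≤ ⟪z, p⟫ - φ p := fun y ↦ by linarith [hp y]
  exact le_antisymm (ciSup_le hle) (le_ciSup ⟨_, forall_mem_range.2 hle⟩ p)

lemma inner_sub_le_fenchelConj (hσ : 0 < σ) (hφ : StrongConvexOn univ σ φ) (z y) :
    ⟪z, y⟫ - φ y ≤ fenchelConj φ z := by
  obtain ⟨p, hp⟩ := (hφ.sub_inner z).exists_forall_le hσ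
  rw [fenchelConj_eq_of_forall_le hp]
  linarith [hp y]

lemma fenchelConj_sub_sub_inner_mem_Icc (hσ : 0 < σ) (hφ : StrongConvexOn univ σ φ)
    (hp : ∀ y, φ p - ⟪z, p⟫ ≤ φ y - ⟪z, y⟫) (w) :
    fenchelConj φ w - fenchelConj φ z - ⟪p, w - z⟫ ∈ Icc 0 (1 / (2 * σ) * ‖w - z‖ ^ 2) := by
  have hz := fenchelConj_eq_of_forall_le hp
  refine ⟨?_, ?_⟩
  · have := inner_sub_le_fenchelConj hσ hφ w p
    rw [hz, inner_sub_right, real_inner_comm z p, real_inner_comm w p]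
    linarith
  suffices fenchelConj φ w ≤ fenchelConj φ z + ⟪p, w - z⟫ + 1 / (2 * σ) * ‖w - z‖ ^ 2 by linarith
  refine ciSup_le fun y ↦ ?_
  have hquad := (hφ.sub_inner z).add_sq_le_of_forall_le hp y
  have hyoung : ⟪w - z, y - p⟫ ≤ σ / 2 * ‖y - p‖ ^ 2 + 1 / (2 * σ) * ‖w - z‖ ^ 2 := by
    refine (real_inner_le_norm _ _).trans (sub_nonneg.1 ?_)
    have e : σ / 2 * ‖y - p‖ ^ 2 + 1 / (2 * σ) * ‖w - z‖ ^ 2 - ‖w - z‖ * ‖y - p‖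
        = (σ * ‖y - p‖ - ‖w - z‖) ^ 2 / (2 * σ) := by
      field_simp
      ring
    rw [e]
    positivity
  have h3 : ⟪w, y⟫ = ⟪w - z, y - p⟫ + ⟪p, w - z⟫ + ⟪z, y⟫ := by
    simp only [inner_sub_left, inner_sub_right, real_inner_comm p w, real_inner_comm p z]
    ring
  rw [hz]
  linarith

/-- `∇φ*` inverts `∂φ`: `∇φ*(z)` minimises `φ - ⟪z, ·⟫`. -/
lemma forall_le_of_hasGradientAt_fenchelConj (hσ : 0 < σ) (hφ : StrongConvexOn univ σ φ)
    (hq : HasGradientAt (fenchelConj φ) q z) (y) : φ q - ⟪z, q⟫ ≤ φ y - ⟪z, y⟫ := by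
  obtain ⟨p, hp⟩ := (hφ.sub_inner z).exists_forall_le hσ
  have hgrad : HasGradientAt (fenchelConj φ) p z := by
    refine hasGradientAt_of_abs_sub_le (1 / (2 * σ)) fun w ↦ ?_
    obtain ⟨hlow, hupp⟩ := fenchelConj_sub_sub_inner_mem_Icc hσ hφ hp w
    rwa [abs_of_nonneg hlow]
  rw [hq.unique hgrad]
  exact hp y

lemma bregmanDiv_fenchelConj_nonneg (hσ : 0 < σ) (hφ : StrongConvexOn univ σ φ)
    {ψ' : EuclideanSpace ℝ (Fin n) → EuclideanSpace ℝ (Fin n)}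
    (hψ' : HasGradientAt (fenchelConj φ) (ψ' x) x) (y) :
    0 ≤ bregmanDiv (fenchelConj φ) ψ' y x :=
  (fenchelConj_sub_sub_inner_mem_Icc hσ hφ (forall_le_of_hasGradientAt_fenchelConj hσ hφ hψ') y).1

lemma bregmanDiv_fenchelConj_le (hσ : 0 < σ) (hφ : StrongConvexOn univ σ φ)
    {ψ' : EuclideanSpace ℝ (Fin n) → EuclideanSpace ℝ (Fin n)}
    (hψ' : HasGradientAt (fenchelConj φ) (ψ' x) x) (y) :
    bregmanDiv (fenchelConj φ) ψ' y x ≤ 1 / (2 * σ) * ‖y - x‖ ^ 2 :=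
  (fenchelConj_sub_sub_inner_mem_Icc hσ hφ (forall_le_of_hasGradientAt_fenchelConj hσ hφ hψ') y).2

end FenchelConj

section AcceleratedMirrorDescent

variable {E : Type*} [NormedAddCommGroup E] [InnerProductSpace ℝ E]

/-- With `x₀ = x_k` and `x₁ = x_{k+1}`, the right-hand side is `⟪∇f(x_{k+1}), ∇φ*(z_{k+1}) - x⋆⟫`
by the mirror step; the bound combines co-coercivity at `(x_{k+1}, x⋆)` and `(x_{k+1}, x_k)`. -/
lemma inner_gradient_mirror_point_ge [CompleteSpace E] {f : E → ℝ} {f' : E → E} {L s : ℝ}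
    (hf : ConvexOn ℝ univ f)
    (hfd : ∀ x, HasGradientAt f (f' x) x) (hfL : ∀ x y, ‖f' x - f' y‖ ≤ L * ‖x - y‖)
    (hs : 0 ≤ s) (hsL : s * L ≤ 1) {xs : E} (hxs : f' xs = 0) (k : ℕ) (x₀ x₁ : E) :
    ((k : ℝ) + 3) / 2 * (f x₁ - f xs) - ((k : ℝ) + 1) / 2 * (f x₀ - f xs)
        + ((k : ℝ) + 3) * s / 4 * ‖f' x₁‖ ^ 2 ≤
      ⟪f' x₁, (1 / 2 : ℝ) • (((k : ℝ) + 3) • x₁ - ((k : ℝ) + 1) • x₀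
        + (((k : ℝ) + 1) * s) • f' x₀) - xs⟫ := by
  have hstar := add_inner_add_sq_gradient_le hf hfd hfL hs hsL x₁ xs
  have hprev := add_inner_add_sq_gradient_le hf hfd hfL hs hsL x₁ x₀
  rw [hxs, zero_sub, norm_neg] at hstar
  have hpolar := norm_sub_sq_real (f' x₀) (f' x₁)
  have hsplit : (1 / 2 : ℝ) • (((k : ℝ) + 3) • x₁ - ((k : ℝ) + 1) • x₀
      + (((k : ℝ) + 1) * s) • f' x₀) - xs
      = (x₁ - xs) - (((k : ℝ) + 1) / 2) • (x₀ - x₁) + (((k : ℝ) + 1) * s / 2) • f' x₀ := by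
    module
  rw [hsplit, inner_add_right, inner_sub_right, real_inner_smul_right, real_inner_smul_right,
    real_inner_comm (f' x₀)]
  simp only [inner_sub_right] at hstar hprev ⊢
  linear_combination hstar + ((k : ℝ) + 1) / 2 * hprev + - ((k : ℝ) + 1) * s / 4 * hpolar
    + ((k : ℝ) + 1) * s / 4 * sq_nonneg ‖f' x₀‖

noncomputable def amdEnergy (f ψ : E → ℝ) (ψ' : E → E) (σ s : ℝ) (x z : ℕ → E) (xs zs : E)
    (k : ℕ) : ℝ :=
  ((k : ℝ) + 1) * ((k : ℝ) + 2) * σ * s / 4 * (f (x k) - f xs) + bregmanDiv ψ ψ' (z (k + 1)) zs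

lemma amdEnergy_succ_le {n : ℕ} {f φ : EuclideanSpace ℝ (Fin n) → ℝ}
    {f' ψ' : EuclideanSpace ℝ (Fin n) → EuclideanSpace ℝ (Fin n)} {σ L s : ℝ}
    {x z : ℕ → EuclideanSpace ℝ (Fin n)} {xs zs : EuclideanSpace ℝ (Fin n)}
    (hσ : 0 < σ) (hφ : StrongConvexOn univ σ φ)
    (hψ' : ∀ z, HasGradientAt (fenchelConj φ) (ψ' z) z) (hf : ConvexOn ℝ univ f)
    (hfd : ∀ x, HasGradientAt f (f' x) x) (hfL : ∀ x y, ‖f' x - f' y‖ ≤ L * ‖x - y‖)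
    (hs : 0 ≤ s) (hsL : s * L ≤ 1)
    (hz : ∀ k : ℕ, z (k + 1) = z k - ((((k : ℝ) + 1) * σ * s) / 2) • f' (x k))
    (hxz : ∀ k : ℕ, ψ' (z (k + 1)) =
      (1 / 2 : ℝ) • (((k : ℝ) + 3) • x (k + 1) - ((k : ℝ) + 1) • x k
        + (((k : ℝ) + 1) * s) • f' (x k)))
    (hxs : f' xs = 0) (hzs : ψ' zs = xs) (k : ℕ) :
    amdEnergy f (fenchelConj φ) ψ' σ s x z xs zs (k + 1) ≤
      amdEnergy f (fenchelConj φ) ψ' σ s x z xs zs k := by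
  set η := ((k : ℝ) + 2) * σ * s / 2
  have hstep : z (k + 1 + 1) - z (k + 1) = -(η • f' (x (k + 1))) := by
    rw [hz (k + 1)]
    push_cast
    module
  have hthree := bregmanDiv_sub_bregmanDiv (fenchelConj φ) ψ' (z (k + 1 + 1)) (z (k + 1)) zs
  have hquad := bregmanDiv_fenchelConj_le hσ hφ (hψ' (z (k + 1))) (z (k + 1 + 1))
  have hlower := inner_gradient_mirror_point_ge hf hfd hfL hs hsL hxs k (x k) (x (k + 1))
  rw [← hxz k] at hlower
  rw [hstep, hzs, inner_neg_right, real_inner_smul_right, real_inner_comm] at hthree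
  rw [hstep, norm_neg, norm_smul, Real.norm_of_nonneg (by positivity), mul_pow] at hquad
  have hη : 1 / (2 * σ) * η ^ 2 = ((k : ℝ) + 2) ^ 2 * σ * s ^ 2 / 8 := by
    field_simp
    ring
  unfold amdEnergy
  push_cast
  linear_combination hthree + hquad + η * hlower + ‖f' (x (k + 1))‖ ^ 2 * hη
    + ((k : ℝ) + 2) * σ * s ^ 2 / 8 * sq_nonneg ‖f' (x (k + 1))‖

end AcceleratedMirrorDescent

/-- For unconstrained accelerated mirror descent with `0 < s ≤ 1/L`,
`f(x_k) − f(x*) ≤ (2σs[f(x₀) − f(x*)] + 4D_{φ*}(z₁, z*))/((k+1)(k+2)σs)` for every `k ≥ 0`. -/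
theorem accelerated_mirror_descent_function_value_rate
{n : ℕ} (f φ : EuclideanSpace ℝ (Fin n) → ℝ)
    (f' gφs : EuclideanSpace ℝ (Fin n) → EuclideanSpace ℝ (Fin n))
    (σ L s : ℝ) (hσ : 0 < σ)
    -- f is convex and differentiable with L-Lipschitz gradient
    (hfconv : ConvexOn ℝ Set.univ f)
    (hfd : ∀ x, HasGradientAt f (f' x) x)
    (hfL : ∀ x y, ‖f' x - f' y‖ ≤ L * ‖x - y‖)
    -- φ is σ-strongly convex
    (hφsc : StrongConvexOn Set.univ σ φ)
    -- φ* is differentiable with gradient gφs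
    (hgφs : ∀ z, HasGradientAt (fenchelConj φ) (gφs z) z)
    -- the unconstrained accelerated mirror descent iteration
    (x z : ℕ → EuclideanSpace ℝ (Fin n))
    (hz : ∀ k : ℕ, z (k + 1) = z k - ((((k : ℝ) + 1) * σ * s) / 2) • f' (x k))
    (hxz : ∀ k : ℕ, gφs (z (k + 1)) =
      (1 / 2 : ℝ) • ((((k : ℝ) + 3)) • x (k + 1) - (((k : ℝ) + 1)) • x k +
        ((((k : ℝ) + 1)) * s) • f' (x k)))
    -- x* is a global minimizer of f and ∇φ*(z*) = x*
    (xs zs : EuclideanSpace ℝ (Fin n))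
    (hxs : ∀ w, f xs ≤ f w) (hzs : gφs zs = xs)
    (hs : 0 < s) (hsL : s ≤ 1 / L) :
    ∀ k : ℕ,
      f (x k) - f xs ≤
        (2 * σ * s * (f (x 0) - f xs) +
            4 * (fenchelConj φ (z 1) - fenchelConj φ zs - ⟪gφs zs, z 1 - zs⟫)) /
          ((((k : ℝ) + 1) * ((k : ℝ) + 2)) * σ * s) := by
  intro k
  have hL : 0 < L := one_div_pos.1 (hs.trans_le hsL)
  have hsL' : s * L ≤ 1 := (le_div_iff₀ hL).1 hsL
  have hE : amdEnergy f (fenchelConj φ) gφs σ s x z xs zs k ≤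
      amdEnergy f (fenchelConj φ) gφs σ s x z xs zs 0 :=
    antitone_nat_of_succ_le (amdEnergy_succ_le hσ hφsc hgφs hfconv hfd hfL hs.le hsL' hz hxz
      ((hfd xs).eq_zero_of_forall_le hxs) hzs) k.zero_le
  have hD := bregmanDiv_fenchelConj_nonneg hσ hφsc (hgφs zs) (z (k + 1))
  unfold amdEnergy bregmanDiv at hE hD
  rw [le_div_iff₀ (by positivity)]
  push_cast at hE
  linarith
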